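/- arXiv:1007.2054 — 4 statements merged into one kernel-verified Lean document; each statement's English description precedes it below -/
import Mathlib

section
/- For a prime p and integers a, b with p ∤ ab, the square of the Kloosterman sum satisfies K(a,b)^2 = p + ∑_{l=1}^{p} (Legendre symbol ((l^2 - 4l)/p)) · K(a, lb), where K(a,b) = ∑_{x=1}^{p-1} e_p(a x + b x̄). -/
/-!
Substituting `y = t x` in the double sum for `K(a, b)²` and then rescaling `x` by `1 + t` gives
`K(a, b)² = ∑_{t ≠ 0} K(a, (t + t⁻¹ + 2) b) + p`, the term `t = -1` contributing
`K(0, 0) - K(a, 0) = (p - 1) + 1`. The value `l = t + t⁻¹ + 2` is taken by exactly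
`1 + ((l² - 4l)/p)` units `t`, since `t ↦ t - t⁻¹` maps them bijectively onto the square roots
of `l² - 4l`. Finally `∑_l K(a, l b) = 0` because the sum over `l` of `e_p(l b x̄)` vanishes.
-/

open Finset

/-- `ep p α = exp(2πiα/p)`. -/
noncomputable def ep (p : ℕ) (α : ℤ) : ℂ := Complex.exp (2 * Real.pi * Complex.I * α / p)

/-- The Kloosterman sum `K(a,b) = ∑_{x=1}^{p-1} e_p(a x + b x̄)`. -/
noncomputable def Kl (p : ℕ) (a b : ℤ) : ℂ :=
  ∑ x ∈ Finset.Icc 1 (p - 1), ep p (a * x + b * (((x : ZMod p)⁻¹).val : ℤ))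

theorem sum_units_eq_sum_sub_zero {G₀ M : Type*} [GroupWithZero G₀] [Fintype G₀] [DecidableEq G₀]
    [AddCommGroup M] (f : G₀ → M) : ∑ x : G₀ˣ, f x = ∑ x, f x - f 0 := by
  rw [Fintype.sum_eq_sum_compl_add (0 : G₀), add_sub_cancel_right,
    sum_subtype {0}ᶜ (p := (· ≠ 0)) (by simp)]
  exact Fintype.sum_equiv unitsEquivNeZero _ _ fun _ => rfl

section OddCharacteristic

variable {F : Type*} [Field F] [Fintype F] [DecidableEq F]

theorem card_units_add_inv_add_two_eq (hF : ringChar F ≠ 2) (l : F) :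
    (#{t : Fˣ | (t : F) + (t : F)⁻¹ + 2 = l} : ℤ) = quadraticChar F (l ^ 2 - 4 * l) + 1 := by
  rw [← quadraticChar_card_sqrts hF, Set.toFinset_ofPred]
  have h2 : (2 : F) ≠ 0 := Ring.two_ne_zero hF
  have hmul {v : F} (hv : v ^ 2 = l ^ 2 - 4 * l) : (l - 2 + v) / 2 * ((l - 2 - v) / 2) = 1 := by
    field_simp
    linear_combination -hv
  congr 1
  refine card_bij' (fun t _ => (t : F) - (t : F)⁻¹)
    (fun v hv => Units.mk0 ((l - 2 + v) / 2) (left_ne_zero_of_mul_eq_one (hmul (by simpa using hv))))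
    (fun t ht => ?_) (fun v hv => ?_) (fun t ht => ?_) (fun v hv => ?_)
  · simp only [mem_filter_univ] at ht ⊢
    rw [← ht]
    field_simp [t.ne_zero]
    ring
  · have hsq : v ^ 2 = l ^ 2 - 4 * l := by simpa using hv
    simp only [mem_filter_univ, Units.val_mk0, inv_eq_of_mul_eq_one_right (hmul hsq)]
    field_simp
    ring
  · simp only [mem_filter_univ] at ht
    ext
    rw [Units.val_mk0, ← ht]
    field_simp
    ring
  · have hsq : v ^ 2 = l ^ 2 - 4 * l := by simpa using hv
    rw [Units.val_mk0, inv_eq_of_mul_eq_one_right (hmul hsq)]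
    field_simp
    ring

theorem sum_units_add_inv_add_two {M : Type*} [AddCommGroup M] (hF : ringChar F ≠ 2)
    (f : F → M) :
    ∑ t : Fˣ, f (t + (t : F)⁻¹ + 2) = ∑ l, (quadraticChar F (l ^ 2 - 4 * l) + 1) • f l := by
  rw [← sum_fiberwise' univ (fun t : Fˣ => (t : F) + (t : F)⁻¹ + 2) f]
  refine sum_congr rfl fun l _ => ?_
  rw [sum_const, ← card_units_add_inv_add_two_eq hF, natCast_zsmul]

end OddCharacteristic

section Kloosterman

variable {F R : Type*} [Field F] [Fintype F] [DecidableEq F] [CommRing R]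

def kloosterman (ψ : AddChar F R) (a b : F) : R := ∑ x : Fˣ, ψ (a * x + b * (x : F)⁻¹)

variable (ψ : AddChar F R)

theorem kloosterman_mul_left (a b : F) {c : F} (hc : c ≠ 0) :
    kloosterman ψ (c * a) b = kloosterman ψ a (c * b) :=
  Fintype.sum_equiv (Equiv.mulLeft (Units.mk0 c hc)) _ _ fun x => by
    simp only [Equiv.coe_mulLeft, Units.val_mul, Units.val_mk0]
    field_simp

theorem kloosterman_zero_zero : kloosterman ψ 0 0 = Fintype.card Fˣ := by
  simp [kloosterman]

theorem sq_kloosterman_eq_sum_units (a b : F) :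
    kloosterman ψ a b ^ 2 = ∑ t : Fˣ, kloosterman ψ ((1 + t) * a) ((1 + (t : F)⁻¹) * b) := by
  simp only [sq, kloosterman, sum_mul_sum]
  conv_rhs => rw [sum_comm]
  refine sum_congr rfl fun x _ => (Fintype.sum_equiv (Equiv.mulRight x) _ _ fun t => ?_).symm
  rw [← AddChar.map_add_eq_mul]
  simp only [Equiv.coe_mulRight, Units.val_mul]
  congr 1
  field_simp [x.ne_zero, t.ne_zero]
  ring

variable [IsDomain R] {ψ}

theorem kloosterman_zero_right (hψ : ψ.IsPrimitive) {a : F} (ha : a ≠ 0) :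
    kloosterman ψ a 0 = -1 := by
  simp only [kloosterman, zero_mul, add_zero, mul_comm a]
  rw [sum_units_eq_sum_sub_zero (fun x => ψ (x * a)), zero_mul, AddChar.map_zero_eq_one,
    AddChar.sum_mulShift a hψ, if_neg ha, Nat.cast_zero, zero_sub]

theorem sum_kloosterman_mul_right (hψ : ψ.IsPrimitive) (a : F) {b : F} (hb : b ≠ 0) :
    ∑ l, kloosterman ψ a (l * b) = 0 := by
  simp only [kloosterman]
  rw [sum_comm]
  refine sum_eq_zero fun x _ => ?_
  simp_rw [AddChar.map_add_eq_mul, ← mul_sum, mul_assoc]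
  rw [AddChar.sum_mulShift _ hψ, if_neg (mul_ne_zero hb (inv_ne_zero x.ne_zero)), Nat.cast_zero,
    mul_zero]

theorem kloosterman_one_add_mul_one_add_inv_mul (hψ : ψ.IsPrimitive) {a : F} (ha : a ≠ 0) (b : F)
    (t : Fˣ) :
    kloosterman ψ ((1 + t) * a) ((1 + (t : F)⁻¹) * b) =
      kloosterman ψ a ((t + (t : F)⁻¹ + 2) * b) + if t = -1 then (Fintype.card F : R) else 0 := by
  by_cases ht : t = -1
  · subst ht
    have hcard : Fintype.card F = Fintype.card Fˣ + 1 := by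
      rw [Fintype.card_units, Nat.sub_add_cancel Fintype.card_pos]
    norm_num [kloosterman_zero_zero, kloosterman_zero_right hψ ha, hcard]
  · have h1t : 1 + (t : F) ≠ 0 := fun h =>
      ht (Units.ext (by simpa using eq_neg_of_add_eq_zero_right h))
    rw [kloosterman_mul_left ψ _ _ h1t, if_neg ht, add_zero]
    congr 1
    field_simp [t.ne_zero]
    ring

theorem sq_kloosterman (hF : ringChar F ≠ 2) (hψ : ψ.IsPrimitive) {a b : F} (ha : a ≠ 0)
    (hb : b ≠ 0) :
    kloosterman ψ a b ^ 2 =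
      Fintype.card F + ∑ l, (quadraticChar F (l ^ 2 - 4 * l) : R) * kloosterman ψ a (l * b) := by
  rw [sq_kloosterman_eq_sum_units,
    sum_congr rfl fun t _ => kloosterman_one_add_mul_one_add_inv_mul hψ ha b t,
    sum_add_distrib, sum_ite_eq', if_pos (mem_univ _),
    sum_units_add_inv_add_two hF fun l => kloosterman ψ a (l * b)]
  simp only [add_smul, one_smul, zsmul_eq_mul, sum_add_distrib, sum_kloosterman_mul_right hψ a hb]
  ring

end Kloosterman

theorem sum_Icc_one_natCast_eq_sum {M : Type*} [AddCommMonoid M] (n : ℕ) [NeZero n]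
    (f : ZMod n → M) : ∑ l ∈ Icc 1 n, f l = ∑ l, f l := by
  refine sum_nbij' (fun l => (l : ZMod n)) (fun z => (z - 1).val + 1) (fun _ _ => mem_univ _)
    (fun z _ => ?_) (fun l hl => ?_) (fun z _ => ?_) (fun _ _ => rfl)
  · simpa using (z - 1).val_lt
  · obtain ⟨hl1, hln⟩ := mem_Icc.mp hl
    obtain ⟨k, rfl⟩ := Nat.exists_eq_add_of_le' hl1
    simp [ZMod.val_cast_of_lt (by omega : k < n)]
  · simp

theorem Kl_eq_kloosterman (p : ℕ) [Fact p.Prime] (a b : ℤ) :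
    Kl p a b = kloosterman ZMod.stdAddChar (a : ZMod p) (b : ZMod p) := by
  have hp : p - 1 + 1 = p := Nat.sub_add_cancel (Fact.out : p.Prime).one_le
  set G : ZMod p → ℂ := fun x => ZMod.stdAddChar ((a : ZMod p) * x + (b : ZMod p) * x⁻¹)
  have hG (x : ℕ) : ep p (a * x + b * (((x : ZMod p)⁻¹).val : ℤ)) = G x := by
    rw [ep, ← ZMod.stdAddChar_coe]
    push_cast
    rw [ZMod.natCast_val, ZMod.cast_id]
  calc Kl p a b = ∑ x ∈ Icc 1 (p - 1), G x := sum_congr rfl fun x _ => hG x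
    _ = ∑ x ∈ Icc 1 p, G x - G 0 := by
      rw [show Icc 1 p = Icc 1 (p - 1 + 1) by rw [hp], sum_Icc_succ_top (by omega), hp,
        ZMod.natCast_self, add_sub_cancel_right]
    _ = _ := by rw [sum_Icc_one_natCast_eq_sum, kloosterman, sum_units_eq_sum_sub_zero G]

theorem stmt0 (p : ℕ) [Fact p.Prime] (hp2 : p ≠ 2) (a b : ℤ)
    (ha : ¬ (p : ℤ) ∣ a) (hb : ¬ (p : ℤ) ∣ b) :
    (Kl p a b) ^ 2 =
      p + ∑ l ∈ Finset.Icc 1 p,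
        ((legendreSym p ((l : ℤ) ^ 2 - 4 * l) : ℤ) : ℂ) * Kl p a (l * b) := by
  have hF : ringChar (ZMod p) ≠ 2 := by rwa [ZMod.ringChar_zmod_n]
  have ha' : (a : ZMod p) ≠ 0 := by rwa [Ne, ZMod.intCast_zmod_eq_zero_iff_dvd]
  have hb' : (b : ZMod p) ≠ 0 := by rwa [Ne, ZMod.intCast_zmod_eq_zero_iff_dvd]
  rw [Kl_eq_kloosterman, sq_kloosterman hF (ZMod.isPrimitive_stdAddChar p) ha' hb', ZMod.card,
    ← sum_Icc_one_natCast_eq_sum p]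
  refine congrArg _ (sum_congr rfl fun l _ => ?_)
  rw [Kl_eq_kloosterman, legendreSym]
  push_cast
  rfl
end

section
/- For an odd prime p and an integer l with p ∤ l, the number of integers z with 1 ≤ z ≤ p-2 satisfying (z+1)̄ - z̄ ≡ l (mod p) equals 1 + ((l^2 - 4l)/p), where (·/p) is the Legendre symbol. -/
open Finset

/-!
Since `(z + 1)⁻¹ - z⁻¹ = -(z (z + 1))⁻¹`, the congruence says that `z` is a root of
`l z² + l z + 1`, whose roots are automatically different from `0` and `-1`. Completing the
square, `z ↦ 2 l z + l` is a bijection from these roots onto the square roots of the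
discriminant `l² - 4 l`, and there are `1 + (l² - 4l / p)` of those.
-/

theorem inv_add_one_sub_inv_eq_iff {K : Type*} [Field K] {x a : K} (hx : x ≠ 0)
    (hx1 : x + 1 ≠ 0) : (x + 1)⁻¹ - x⁻¹ = a ↔ a * (x * x) + a * x + 1 = 0 := by
  rw [inv_sub_inv hx1 hx, div_eq_iff (mul_ne_zero hx1 hx)]
  constructor <;> intro h <;> linear_combination -h

theorem card_filter_quadratic_eq_card_sqrts_discrim {K : Type*} [Field K] [Fintype K]
    [DecidableEq K] [NeZero (2 : K)] {a : K} (ha : a ≠ 0) (b c : K) :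
    #{x | a * (x * x) + b * x + c = 0} = #{y | y ^ 2 = discrim a b c} := by
  have h2a : 2 * a ≠ 0 := mul_ne_zero two_ne_zero ha
  refine card_bij' (fun x _ => 2 * a * x + b) (fun y _ => (y - b) / (2 * a)) ?_ ?_ ?_ ?_
  · intro x hx
    simp only [mem_filter, mem_univ, true_and] at hx ⊢
    exact ((quadratic_eq_zero_iff_discrim_eq_sq ha x).mp hx).symm
  · intro y hy
    simp only [mem_filter, mem_univ, true_and] at hy ⊢
    rw [quadratic_eq_zero_iff_discrim_eq_sq ha, ← hy, mul_div_cancel₀ _ h2a, sub_add_cancel]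
  · intro x _
    rw [add_sub_cancel_right, mul_div_cancel_left₀ _ h2a]
  · intro y _
    rw [mul_div_cancel₀ _ h2a, sub_add_cancel]

theorem natCast_ne_zero_and_add_one_ne_zero {n z : ℕ} (hz : z ∈ Icc 1 (n - 2)) :
    (z : ZMod n) ≠ 0 ∧ (z : ZMod n) + 1 ≠ 0 := by
  rw [mem_Icc] at hz
  have hne : ∀ m, 0 < m → m < n → (m : ZMod n) ≠ 0 := fun m hm hmn h =>
    hm.ne' (Nat.eq_zero_of_dvd_of_lt ((ZMod.natCast_eq_zero_iff m n).mp h) hmn)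
  refine ⟨hne z (by omega) (by omega), ?_⟩
  exact_mod_cast hne (z + 1) (by omega) (by omega)

theorem card_filter_Icc_natCast_eq_card_filter {n : ℕ} [NeZero n] (P : ZMod n → Prop)
    [DecidablePred P] (h0 : ¬ P 0) (hneg : ¬ P (-1)) :
    #((Icc 1 (n - 2)).filter fun z : ℕ => P z) = #{x | P x} := by
  refine card_bij' (fun z _ => (z : ZMod n)) (fun x _ => x.val) ?_ ?_ ?_ ?_
  · intro z hz
    simp only [mem_filter, mem_univ, true_and] at hz ⊢
    exact hz.2
  · intro x hx
    simp only [mem_filter, mem_univ, true_and, mem_Icc] at hx ⊢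
    rw [ZMod.natCast_zmod_val]
    have hval0 : x.val ≠ 0 := fun h => h0 (by rwa [(ZMod.val_eq_zero x).mp h] at hx)
    have hval1 : x.val ≠ n - 1 := by
      intro h
      apply hneg
      have hn : 1 ≤ n := NeZero.one_le
      rwa [← ZMod.natCast_zmod_val x, h, Nat.cast_sub hn, ZMod.natCast_self, zero_sub,
        Nat.cast_one] at hx
    have := ZMod.val_lt x
    exact ⟨⟨by omega, by omega⟩, hx⟩
  · intro z hz
    simp only [mem_filter, mem_Icc] at hz
    exact ZMod.val_natCast_of_lt (by omega)
  · intro x _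
    exact ZMod.natCast_zmod_val x

theorem stmt2 (p : ℕ) [Fact p.Prime] (hp2 : p ≠ 2) (l : ℤ) (hl : ¬ (p : ℤ) ∣ l) :
    (((Finset.Icc 1 (p - 2)).filter
        (fun z : ℕ => (((z + 1 : ℕ) : ZMod p))⁻¹ - ((z : ZMod p))⁻¹ = (l : ZMod p))).card : ℤ)
      = 1 + legendreSym p (l ^ 2 - 4 * l) := by
  set L : ZMod p := (l : ZMod p)
  have hL : L ≠ 0 := fun h => hl ((ZMod.intCast_zmod_eq_zero_iff_dvd l p).mp h)
  have : NeZero (2 : ZMod p) := ⟨by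
    exact_mod_cast (ZMod.natCast_eq_zero_iff 2 p).not.mpr fun h =>
      hp2 ((Nat.prime_dvd_prime_iff_eq Fact.out Nat.prime_two).mp h)⟩
  have hcount :
      #((Icc 1 (p - 2)).filter fun z : ℕ => ((z + 1 : ℕ) : ZMod p)⁻¹ - (z : ZMod p)⁻¹ = L)
        = #{y : ZMod p | y ^ 2 = discrim L L 1} := calc
    _ = #((Icc 1 (p - 2)).filter fun z : ℕ => L * ((z : ZMod p) * z) + L * z + 1 = 0) := by
      refine congrArg card (filter_congr fun z hz => ?_)
      obtain ⟨hz0, hz1⟩ := natCast_ne_zero_and_add_one_ne_zero hz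
      push_cast
      exact inv_add_one_sub_inv_eq_iff hz0 hz1
    _ = #{x : ZMod p | L * (x * x) + L * x + 1 = 0} :=
      card_filter_Icc_natCast_eq_card_filter (fun x => L * (x * x) + L * x + 1 = 0)
        (by simp) (by simp)
    _ = #{y : ZMod p | y ^ 2 = discrim L L 1} :=
      card_filter_quadratic_eq_card_sqrts_discrim hL L 1
  have hdiscrim : discrim L L 1 = ((l ^ 2 - 4 * l : ℤ) : ZMod p) := by
    rw [discrim]; push_cast; ring
  rw [hcount, hdiscrim, ← Set.toFinset_ofPred, legendreSym.card_sqrts p hp2, add_comm]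
end

section
/- For an odd prime p and integers a, b with p ∤ ab, the sum ∑_{l=1}^{p} ((l^2-4l)/p) · K(a, lb) has absolute value at most p^{3/2}. -/
/-!
By Cauchy–Schwarz and `|(·/p)| ≤ 1`, the square of the sum is at most `p · ∑_l |K(a, lb)|²`.
Writing `K(a, lb) = ∑_x e_p(a x) e_p(l · b x̄)` and summing over `l`, orthogonality of additive
characters collapses the double sum over `x, y` to its diagonal, because `x ↦ b x̄` is injective
mod `p`; this gives the second moment `p (p - 1)`, hence a bound `p² (p - 1) ≤ p³`.
-/

open Finset

theorem norm_sum_mul_sq_le_card_mul_sum_norm_sq {ι R : Type*} [SeminormedRing R]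
    (s : Finset ι) (c z : ι → R) (hc : ∀ i ∈ s, ‖c i‖ ≤ 1) :
    ‖∑ i ∈ s, c i * z i‖ ^ 2 ≤ #s * ∑ i ∈ s, ‖z i‖ ^ 2 := by
  have h : ‖∑ i ∈ s, c i * z i‖ ≤ ∑ i ∈ s, ‖z i‖ :=
    (norm_sum_le _ _).trans <| sum_le_sum fun i hi =>
      (norm_mul_le _ _).trans (mul_le_of_le_one_left (norm_nonneg _) (hc i hi))
  exact (pow_le_pow_left₀ (norm_nonneg _) h 2).trans sq_sum_le_card_mul_sum_sq

theorem AddChar.sum_norm_sq_sum_mul_mulShift {R ι : Type*} [CommRing R] [Fintype R]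
    {ψ : AddChar R ℂ} (hψ : ψ.IsPrimitive) (s : Finset ι) (w : ι → ℂ)
    {β : ι → R} (hβ : Set.InjOn β s) :
    ∑ u : R, ‖∑ x ∈ s, w x * ψ (u * β x)‖ ^ 2 = Fintype.card R * ∑ x ∈ s, ‖w x‖ ^ 2 := by
  classical
  have orthogonality : ∀ x ∈ s, ∀ y ∈ s,
      ∑ u : R, ψ (u * β x) * (starRingEnd ℂ) (ψ (u * β y)) =
        if x = y then (Fintype.card R : ℂ) else 0 := by
    intro x hx y hy
    simp_rw [AddChar.starComp_apply (Nat.pos_of_ne_zero (CharP.ringChar_ne_zero_of_finite R)),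
      AddChar.inv_apply, ← AddChar.map_add_eq_mul, ← mul_neg, ← mul_add,
      AddChar.sum_mulShift _ hψ, add_neg_eq_zero, hβ.eq_iff hx hy]
    split_ifs <;> simp
  apply Complex.ofReal_injective
  push_cast
  calc ∑ u : R, (‖∑ x ∈ s, w x * ψ (u * β x)‖ : ℂ) ^ 2
      = ∑ x ∈ s, ∑ y ∈ s, w x * (starRingEnd ℂ) (w y) *
          ∑ u : R, ψ (u * β x) * (starRingEnd ℂ) (ψ (u * β y)) := by
        simp_rw [← Complex.mul_conj', map_sum, map_mul, sum_mul_sum, mul_sum]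
        rw [sum_comm]
        refine sum_congr rfl fun x _ => ?_
        rw [sum_comm]
        exact sum_congr rfl fun y _ => sum_congr rfl fun u _ => by ring
    _ = ∑ x ∈ s, w x * (starRingEnd ℂ) (w x) * Fintype.card R := by
        refine sum_congr rfl fun x hx => ?_
        rw [sum_congr rfl fun y hy => by rw [orthogonality x hx y hy]]
        simp [hx]
    _ = Fintype.card R * ∑ x ∈ s, (‖w x‖ : ℂ) ^ 2 := by
        simp_rw [Complex.mul_conj', mul_sum, mul_comm]

theorem ZMod.sum_Icc_one_natCast {M : Type*} [AddCommMonoid M] (N : ℕ) [NeZero N]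
    (f : ZMod N → M) : ∑ l ∈ Icc 1 N, f l = ∑ u : ZMod N, f u := by
  refine sum_nbij' (fun l => (l : ZMod N)) (fun u => if u = 0 then N else u.val)
    (by simp) (fun u _ => ?_) (fun l hl => ?_) (fun u _ => ?_) (fun _ _ => rfl)
  · split_ifs with hu
    · simp [Nat.one_le_iff_ne_zero, NeZero.ne N]
    · simp [Nat.one_le_iff_ne_zero, ZMod.val_eq_zero, hu, (ZMod.val_lt u).le]
  · obtain ⟨hl1, hlN⟩ := mem_Icc.mp hl
    rcases hlN.lt_or_eq with hlt | rfl
    · have : (l : ZMod N) ≠ 0 := by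
        rw [Ne, ZMod.natCast_eq_zero_iff]
        exact Nat.not_dvd_of_pos_of_lt hl1 hlt
      simp [this, ZMod.val_cast_of_lt hlt]
    · simp
  · split_ifs with hu <;> simp [hu]

theorem norm_legendreSym_le_one (p : ℕ) [Fact p.Prime] (n : ℤ) :
    ‖((legendreSym p n : ℤ) : ℂ)‖ ≤ 1 := by
  rw [Complex.norm_intCast]
  by_cases hn : (n : ZMod p) = 0
  · simp [(legendreSym.eq_zero_iff p n).mpr hn]
  · rcases legendreSym.eq_one_or_neg_one p hn with h | h <;> simp [h]

theorem ep_eq_stdAddChar (p : ℕ) [NeZero p] (m : ℤ) : ep p m = ZMod.stdAddChar (m : ZMod p) := by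
  rw [ZMod.stdAddChar_coe, ep]

theorem Kl_eq_sum_stdAddChar (p : ℕ) [NeZero p] (a b : ℤ) :
    Kl p a b = ∑ x ∈ Icc 1 (p - 1),
      ZMod.stdAddChar ((a : ZMod p) * (x : ZMod p)) *
        ZMod.stdAddChar ((b : ZMod p) * (x : ZMod p)⁻¹) := by
  refine sum_congr rfl fun x _ => ?_
  rw [ep_eq_stdAddChar, ← AddChar.map_add_eq_mul]
  push_cast
  rw [ZMod.natCast_zmod_val]

theorem injOn_mul_inv_natCast (p : ℕ) [Fact p.Prime] {b : ZMod p} (hb : b ≠ 0) :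
    Set.InjOn (fun x : ℕ => b * (x : ZMod p)⁻¹) (Icc 1 (p - 1)) := by
  have hlt : ∀ x ∈ Icc 1 (p - 1), x < p := fun x hx => by
    have := (mem_Icc.mp hx).2; have := (Fact.out : p.Prime).pos; omega
  intro x hx y hy hxy
  have hcast : (x : ZMod p) = y := inv_inj.mp (mul_left_cancel₀ hb hxy)
  rwa [ZMod.natCast_eq_natCast_iff', Nat.mod_eq_of_lt (hlt x hx), Nat.mod_eq_of_lt (hlt y hy)]
    at hcast

theorem sum_norm_sq_Kl (p : ℕ) [Fact p.Prime] (a b : ℤ) (hb : ¬ (p : ℤ) ∣ b) :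
    ∑ l ∈ Icc 1 p, ‖Kl p a (l * b)‖ ^ 2 = p * (p - 1) := by
  have hb' : (b : ZMod p) ≠ 0 := by rwa [Ne, ZMod.intCast_zmod_eq_zero_iff_dvd]
  let K : ZMod p → ℂ := fun u => ∑ x ∈ Icc 1 (p - 1),
    ZMod.stdAddChar ((a : ZMod p) * (x : ZMod p)) *
      ZMod.stdAddChar (u * ((b : ZMod p) * (x : ZMod p)⁻¹))
  have hKl (l : ℕ) : Kl p a (l * b) = K l := by
    rw [Kl_eq_sum_stdAddChar]
    push_cast
    simp_rw [K, mul_assoc]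
  rw [sum_congr rfl fun l _ => by rw [hKl l], ZMod.sum_Icc_one_natCast p (fun u => ‖K u‖ ^ 2),
    AddChar.sum_norm_sq_sum_mul_mulShift (ZMod.isPrimitive_stdAddChar p) _ _
      (injOn_mul_inv_natCast p hb')]
  simp [ZMod.stdAddChar_apply, Circle.norm_coe, Nat.cast_sub (Fact.out : p.Prime).one_le]

theorem stmt7_general (p : ℕ) [Fact p.Prime] (a b : ℤ) (hb : ¬ (p : ℤ) ∣ b) :
    ‖∑ l ∈ Finset.Icc 1 p,
        ((legendreSym p ((l : ℤ) ^ 2 - 4 * l) : ℤ) : ℂ) * Kl p a (l * b)‖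
      ≤ (p : ℝ) ^ ((3 : ℝ) / 2) := by
  have hp : (0 : ℝ) ≤ p := Nat.cast_nonneg p
  have hsq : ‖∑ l ∈ Finset.Icc 1 p,
      ((legendreSym p ((l : ℤ) ^ 2 - 4 * l) : ℤ) : ℂ) * Kl p a (l * b)‖ ^ 2 ≤ (p : ℝ) ^ 3 :=
    calc _ ≤ #(Icc 1 p) * ∑ l ∈ Icc 1 p, ‖Kl p a (l * b)‖ ^ 2 :=
          norm_sum_mul_sq_le_card_mul_sum_norm_sq _ _ _ fun l _ => norm_legendreSym_le_one p _
      _ = p * (p * (p - 1)) := by rw [sum_norm_sq_Kl p a b hb, Nat.card_Icc, Nat.add_sub_cancel]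
      _ ≤ p ^ 3 := by nlinarith
  rwa [← pow_le_pow_iff_left₀ (norm_nonneg _) (Real.rpow_nonneg hp _) two_ne_zero,
    ← Real.rpow_mul_natCast hp, show (3 : ℝ) / 2 * (2 : ℕ) = (3 : ℕ) by norm_num,
    Real.rpow_natCast]

theorem stmt7 (p : ℕ) [Fact p.Prime] (hp2 : p ≠ 2) (a b : ℤ)
    (ha : ¬ (p : ℤ) ∣ a) (hb : ¬ (p : ℤ) ∣ b) :
    ‖∑ l ∈ Finset.Icc 1 p,
        ((legendreSym p ((l : ℤ) ^ 2 - 4 * l) : ℤ) : ℂ) * Kl p a (l * b)‖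
      ≤ (p : ℝ) ^ ((3 : ℝ) / 2) :=
  stmt7_general p a b hb
end

section
/- For an odd prime p and integers a, b with p ∤ ab, |K(a,b)| ≤ √(p + p^{3/2}), where K(a,b) = ∑_{x=1}^{p-1} e_p(a x + b x̄). -/
/-!
Moment method. Let `F` be a finite field with `q` elements and odd characteristic, `ψ` a primitive
additive character and `K(c, d) = ∑_{u ∈ Fˣ} ψ(c u + d u⁻¹)`. Orthogonality in both `c` and `d`
turns `∑_{c,d} |K(c,d)|²` and `∑_{c,d} |K(c,d)|⁴` into `q²` times the number of solutions in units
of `x = y, x⁻¹ = y⁻¹`, resp. of `x₁ + x₂ = y₁ + y₂, x₁⁻¹ + x₂⁻¹ = y₁⁻¹ + y₂⁻¹`; the latter system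
forces `{y₁, y₂} = {x₁, x₂}` unless `x₁ + x₂ = 0`. As `K(c, d) = K(cd, 1)` for `d ≠ 0` and `K(c, 0)`
is explicit, this gives `∑_n |K(n,1)|² = q² - q` and `∑_n |K(n,1)|⁴ = 2q³ - 3q² - 3q`. For `m ≠ 0`,
Cauchy–Schwarz on the `q - 2` values `|K(n,1)|²`, `n ∉ {0, m}` (note `K(0,1) = -1`), gives a
quadratic inequality for `|K(m,1)|²` which forces `|K(m,1)|² ≤ q + q^{3/2}`.
-/

open Finset

lemma le_add_mul_sqrt_of_sq_le {q x : ℝ} (hq : 2 ≤ q)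
    (h : (q ^ 2 - q - 1 - x) ^ 2 ≤ (q - 2) * (2 * q ^ 3 - 3 * q ^ 2 - 3 * q - 1 - x ^ 2)) :
    x ≤ q + q * √q := by
  obtain ⟨r, hr0, rfl⟩ : ∃ r, 0 ≤ r ∧ q = r ^ 2 :=
    ⟨√q, Real.sqrt_nonneg q, (Real.sq_sqrt (by linarith)).symm⟩
  rw [Real.sqrt_sq hr0]
  by_contra! hx
  have hr : 0 < r ^ 2 - 1 := by linarith
  -- `h` says `Q x ≤ 0` for a quadratic `Q` with leading coefficient `r² - 1`, while `Q x₀ > 0`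
  -- at `x₀ = r² + r³`; `h₀` is `Q x - Q x₀ > 0`.
  have h₀ : 0 < (x - (r ^ 2 + r ^ 2 * r)) *
      ((r ^ 2 - 1) * (x + r ^ 2 + r ^ 2 * r) - 2 * (r ^ 4 - r ^ 2 - 1)) := by
    apply mul_pos (by linarith)
    nlinarith [mul_lt_mul_of_pos_left hx hr, mul_nonneg (pow_nonneg hr0 3) hr.le]
  nlinarith [mul_nonneg (pow_nonneg hr0 3) hr.le]

lemma sq_sum_sub_sub_le {ι : Type*} [DecidableEq ι] (s : Finset ι) (f : ι → ℝ) {i j : ι}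
    (hi : i ∈ s) (hj : j ∈ s) (hij : i ≠ j) :
    (∑ k ∈ s, f k - f i - f j) ^ 2 ≤ (#s - 2) * (∑ k ∈ s, f k ^ 2 - f i ^ 2 - f j ^ 2) := by
  have hj' : j ∈ s.erase i := mem_erase.2 ⟨hij.symm, hj⟩
  have hcard : (#((s.erase i).erase j) : ℝ) = #s - 2 := by
    rw [← card_erase_add_one hi, ← card_erase_add_one hj']
    push_cast
    ring
  have := sq_sum_le_card_mul_sum_sq (s := (s.erase i).erase j) (f := f)
  rwa [sum_erase_eq_sub hj', sum_erase_eq_sub hi, sum_erase_eq_sub hj', sum_erase_eq_sub hi,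
    hcard] at this

lemma eq_and_eq_or_eq_and_eq_of_add_eq_of_inv_add_eq {K : Type*} [Field K] {a b c d : K}
    (ha : a ≠ 0) (hb : b ≠ 0) (hc : c ≠ 0) (hd : d ≠ 0) (hab : a + b ≠ 0)
    (hsum : a + b = c + d) (hinv : a⁻¹ + b⁻¹ = c⁻¹ + d⁻¹) :
    (c = a ∧ d = b) ∨ (c = b ∧ d = a) := by
  rw [inv_add_inv ha hb, inv_add_inv hc hd, ← hsum,
    div_eq_div_iff (mul_ne_zero ha hb) (mul_ne_zero hc hd)] at hinv
  have hprod : c * d = a * b := mul_left_cancel₀ hab (by linear_combination hinv)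
  have hroot : (c - a) * (c - b) = 0 := by linear_combination c * hsum.symm - hprod
  rcases mul_eq_zero.1 hroot with h | h
  · exact .inl ⟨by linear_combination h, by linear_combination -hsum - h⟩
  · exact .inr ⟨by linear_combination h, by linear_combination -hsum - h⟩

lemma norm_sq_sum_addChar {G : Type*} [AddCommGroup G] [Finite G] (ψ : AddChar G ℂ)
    {T : Type*} [Fintype T] (Φ : T → G) :
    ((‖∑ t, ψ (Φ t)‖ ^ 2 : ℝ) : ℂ) = ∑ x, ∑ y, ψ (Φ x - Φ y) := by
  rw [Complex.ofReal_pow, ← Complex.mul_conj', map_sum, sum_mul_sum]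
  simp_rw [sub_eq_add_neg, AddChar.map_add_eq_mul, AddChar.map_neg_eq_conj]

section FiniteField

variable {F : Type*} [Field F] [Fintype F] [DecidableEq F] {ψ : AddChar F ℂ}

local notation "q" => Fintype.card F

lemma three_le_card (h2 : ringChar F ≠ 2) : 3 ≤ q := by
  have h : (-1 : F) ≠ 1 := Ring.neg_one_ne_one_of_char_ne_two h2
  calc 3 = #({0, 1, -1} : Finset F) := by
        rw [card_insert_of_notMem (by simp), card_pair h.symm]
    _ ≤ q := card_le_univ _

lemma sum_units_add_apply_zero {M : Type*} [AddCommMonoid M] (f : F → M) :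
    ∑ u : Fˣ, f u + f 0 = ∑ x, f x := by
  rw [← sum_erase_add _ _ (mem_univ (0 : F))]
  congr 1
  exact sum_bij' (fun u _ ↦ (u : F)) (fun x hx ↦ Units.mk0 x (ne_of_mem_erase hx))
    (fun u _ ↦ mem_erase.2 ⟨u.ne_zero, mem_univ _⟩) (fun _ _ ↦ mem_univ _)
    (fun _ _ ↦ Units.ext rfl) (fun _ _ ↦ rfl) (fun _ _ ↦ rfl)

lemma sum_addChar_mul_units (hψ : ψ.IsPrimitive) (c : F) :
    ∑ u : Fˣ, ψ (c * u) = (if c = 0 then (q : ℂ) else 0) - 1 := by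
  have h := AddChar.sum_mulShift c hψ
  rw [← sum_units_add_apply_zero] at h
  simpa [mul_comm, eq_sub_iff_add_eq] using h

lemma sum_sum_norm_sq_sum_addChar (hψ : ψ.IsPrimitive) {T : Type*} [Fintype T] (A B : T → F) :
    ∑ c, ∑ d, ‖∑ t, ψ (c * A t + d * B t)‖ ^ 2 =
      (q : ℝ) ^ 2 * #{z : T × T | A z.1 = A z.2 ∧ B z.1 = B z.2} := by
  apply Complex.ofReal_injective
  have hsplit (c d : F) (x y : T) : ψ ((c * A x + d * B x) - (c * A y + d * B y)) =
      ψ (c * (A x - A y)) * ψ (d * (B x - B y)) := by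
    rw [← AddChar.map_add_eq_mul]; ring_nf
  simp only [Complex.ofReal_sum, norm_sq_sum_addChar, hsplit]
  simp_rw [sum_comm (s := (univ : Finset F)) (t := (univ : Finset T)), ← sum_mul_sum,
    AddChar.sum_mulShift _ hψ, card_filter, Fintype.sum_prod_type]
  push_cast
  simp only [mul_sum, sub_eq_zero]
  refine sum_congr rfl fun x _ ↦ sum_congr rfl fun y _ ↦ ?_
  split_ifs <;> simp_all [sq]

def sumInvSumFiber (x : Fˣ × Fˣ) : Finset (Fˣ × Fˣ) :=
  {y | (x.1 + x.2 : F) = y.1 + y.2 ∧ (x.1 : F)⁻¹ + (x.2 : F)⁻¹ = (y.1 : F)⁻¹ + (y.2 : F)⁻¹}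

lemma sumInvSumFiber_of_add_ne_zero {x : Fˣ × Fˣ} (hx : (x.1 + x.2 : F) ≠ 0) :
    sumInvSumFiber x = {x, x.swap} := by
  ext y
  simp only [sumInvSumFiber, mem_filter, mem_univ, true_and, mem_insert, mem_singleton,
    Prod.ext_iff, Prod.fst_swap, Prod.snd_swap, Units.ext_iff]
  constructor
  · rintro ⟨hsum, hinv⟩
    exact eq_and_eq_or_eq_and_eq_of_add_eq_of_inv_add_eq x.1.ne_zero x.2.ne_zero y.1.ne_zero
      y.2.ne_zero hx hsum hinv
  · rintro (⟨h1, h2⟩ | ⟨h1, h2⟩) <;> rw [h1, h2]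
    · exact ⟨rfl, rfl⟩
    · exact ⟨add_comm _ _, add_comm _ _⟩

lemma card_sumInvSumFiber_of_add_eq_zero {x : Fˣ × Fˣ} (hx : (x.1 + x.2 : F) = 0) :
    #(sumInvSumFiber x) = q - 1 := by
  have hx2 : (x.2 : F) = -x.1 := by linear_combination hx
  have hfib : sumInvSumFiber x = univ.image fun u ↦ (u, -u) := by
    ext y
    simp only [sumInvSumFiber, mem_filter, mem_univ, true_and, mem_image]
    constructor
    · rintro ⟨hsum, -⟩
      exact ⟨y.1, Prod.ext rfl (Units.ext (by rw [Units.val_neg]; linear_combination hsum - hx))⟩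
    · rintro ⟨u, rfl⟩
      simp [hx2]
  rw [hfib, card_image_of_injective _ fun u v h ↦ congrArg Prod.fst h, card_univ,
    Fintype.card_units]

lemma sum_card_sumInvSumFiber_mk (h2 : ringChar F ≠ 2) (u : Fˣ) :
    ∑ v, #(sumInvSumFiber (u, v)) = 3 * q - 6 := by
  have hdouble : (u + u : F) ≠ 0 := by
    rw [← two_mul]; exact mul_ne_zero (Ring.two_ne_zero h2) u.ne_zero
  have hneg : -u ≠ u := fun h ↦ hdouble (by nth_rw 1 [← h]; simp)
  have hu : u ∈ univ.erase (-u) := mem_erase.2 ⟨hneg.symm, mem_univ u⟩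
  have hgeneric : ∀ v ∈ (univ.erase (-u)).erase u, #(sumInvSumFiber (u, v)) = 2 := by
    intro v hv
    simp only [mem_erase, mem_univ, and_true] at hv
    have hsum : (u + v : F) ≠ 0 := fun h ↦ hv.2 (Units.ext (by
      rw [Units.val_neg]; linear_combination h))
    rw [sumInvSumFiber_of_add_ne_zero hsum, Prod.swap_prod_mk, card_pair]
    exact fun h ↦ hv.1 (congrArg Prod.snd h)
  have hdiag : #(sumInvSumFiber (u, u)) = 1 := by
    rw [sumInvSumFiber_of_add_ne_zero hdouble, Prod.swap_prod_mk, pair_eq_singleton,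
      card_singleton]
  rw [← add_sum_erase _ _ (mem_univ (-u)), ← add_sum_erase _ _ hu, sum_congr rfl hgeneric,
    card_sumInvSumFiber_of_add_eq_zero (by simp), hdiag, sum_const, smul_eq_mul]
  have h₁ := card_erase_add_one hu
  have h₂ := card_erase_add_one (mem_univ (-u))
  rw [card_univ] at h₂
  have := Fintype.card_eq_card_units_add_one (α := F)
  omega

lemma sum_card_sumInvSumFiber (h2 : ringChar F ≠ 2) :
    ∑ x : Fˣ × Fˣ, #(sumInvSumFiber x) = (q - 1) * (3 * q - 6) := by
  rw [Fintype.sum_prod_type, sum_congr rfl fun u _ ↦ sum_card_sumInvSumFiber_mk h2 u, sum_const,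
    card_univ, Fintype.card_units, smul_eq_mul]

noncomputable def kloostermanSum (ψ : AddChar F ℂ) (c d : F) : ℂ :=
  ∑ u : Fˣ, ψ (c * u + d * (u : F)⁻¹)

lemma kloostermanSum_comm (c d : F) : kloostermanSum ψ c d = kloostermanSum ψ d c :=
  Fintype.sum_equiv (Equiv.inv Fˣ) _ _ fun u ↦ by simp [add_comm]

lemma kloostermanSum_eq_mul_one (c : F) {d : F} (hd : d ≠ 0) :
    kloostermanSum ψ c d = kloostermanSum ψ (c * d) 1 := by
  refine Fintype.sum_equiv (Equiv.mulLeft (Units.mk0 d hd)⁻¹) _ _ fun u ↦ ?_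
  simp only [Equiv.coe_mulLeft, Units.val_mul, Units.val_inv_eq_inv_val, Units.val_mk0]
  congr 1
  field_simp

lemma kloostermanSum_zero_right (hψ : ψ.IsPrimitive) (c : F) :
    kloostermanSum ψ c 0 = (if c = 0 then (q : ℂ) else 0) - 1 := by
  simpa [kloostermanSum] using sum_addChar_mul_units hψ c

lemma kloostermanSum_sq (c d : F) : kloostermanSum ψ c d ^ 2 =
    ∑ x : Fˣ × Fˣ, ψ (c * (x.1 + x.2) + d * ((x.1 : F)⁻¹ + (x.2 : F)⁻¹)) := by
  rw [kloostermanSum, sq, sum_mul_sum, ← Fintype.sum_prod_type']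
  simp only [← AddChar.map_add_eq_mul]
  ring_nf

lemma sum_sum_norm_kloostermanSum_sq (hψ : ψ.IsPrimitive) :
    ∑ c, ∑ d, ‖kloostermanSum ψ c d‖ ^ 2 = (q : ℝ) ^ 2 * (q - 1) := by
  refine (sum_sum_norm_sq_sum_addChar hψ (fun u : Fˣ ↦ (u : F)) (fun u ↦ (u : F)⁻¹)).trans ?_
  simp only [Units.val_inj, inv_inj, and_self]
  rw [← univ_product_univ, ← diag_eq_filter, diag_card, card_univ, Fintype.card_units,
    Nat.cast_pred Fintype.card_pos]

lemma sum_sum_norm_kloostermanSum_pow_four (hψ : ψ.IsPrimitive) (h2 : ringChar F ≠ 2) :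
    ∑ c, ∑ d, ‖kloostermanSum ψ c d‖ ^ 4 = (q : ℝ) ^ 2 * ((q - 1) * (3 * q - 6)) := by
  have h := sum_sum_norm_sq_sum_addChar hψ (fun x : Fˣ × Fˣ ↦ (x.1 + x.2 : F))
    (fun x ↦ (x.1 : F)⁻¹ + (x.2 : F)⁻¹)
  simp_rw [← kloostermanSum_sq, norm_pow, ← pow_mul, Nat.reduceMul] at h
  have hcard : #{z : (Fˣ × Fˣ) × (Fˣ × Fˣ) | (z.1.1 + z.1.2 : F) = z.2.1 + z.2.2 ∧
      (z.1.1 : F)⁻¹ + (z.1.2 : F)⁻¹ = (z.2.1 : F)⁻¹ + (z.2.2 : F)⁻¹} =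
      ∑ x : Fˣ × Fˣ, #(sumInvSumFiber x) := by
    simp only [card_filter, sumInvSumFiber]
    exact Fintype.sum_prod_type _
  rw [h, hcard, sum_card_sumInvSumFiber h2]
  have := three_le_card h2
  push_cast [Nat.cast_sub (by omega : 1 ≤ q), Nat.cast_sub (by omega : 6 ≤ 3 * q)]
  ring

lemma sum_sum_apply_kloostermanSum (g : ℂ → ℝ) :
    ∑ c, ∑ d, g (kloostermanSum ψ c d) =
      ∑ c, g (kloostermanSum ψ c 0) + (q - 1) * ∑ c, g (kloostermanSum ψ c 1) := by
  rw [sum_comm, ← add_sum_erase _ _ (mem_univ 0)]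
  congr 1
  have hrow : ∀ d ∈ univ.erase (0 : F),
      ∑ c, g (kloostermanSum ψ c d) = ∑ c, g (kloostermanSum ψ c 1) := by
    intro d hd
    simp_rw [kloostermanSum_eq_mul_one _ (ne_of_mem_erase hd)]
    exact Fintype.sum_bijective (· * d) (mulRight_bijective₀ d (ne_of_mem_erase hd)) _ _
      fun _ ↦ rfl
  rw [sum_congr rfl hrow, sum_const, card_erase_of_mem (mem_univ _), card_univ, nsmul_eq_mul,
    Nat.cast_pred Fintype.card_pos]

lemma sum_norm_kloostermanSum_zero_right_pow (hψ : ψ.IsPrimitive) (k : ℕ) :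
    ∑ c, ‖kloostermanSum ψ c 0‖ ^ k = ((q : ℝ) - 1) ^ k + (q - 1) := by
  rw [← add_sum_erase _ _ (mem_univ 0), sum_congr rfl fun c hc ↦ by
    rw [kloostermanSum_zero_right hψ, if_neg (ne_of_mem_erase hc)]]
  rw [kloostermanSum_zero_right hψ, if_pos rfl, ← Nat.cast_pred Fintype.card_pos,
    Complex.norm_natCast]
  simp [Nat.cast_pred Fintype.card_pos]

lemma sub_one_mul_sum_norm_kloostermanSum_one_pow (hψ : ψ.IsPrimitive) (k : ℕ) :
    ((q : ℝ) - 1) * ∑ c, ‖kloostermanSum ψ c 1‖ ^ k =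
      ∑ c, ∑ d, ‖kloostermanSum ψ c d‖ ^ k - (((q : ℝ) - 1) ^ k + (q - 1)) := by
  rw [sum_sum_apply_kloostermanSum (‖·‖ ^ k), sum_norm_kloostermanSum_zero_right_pow hψ]
  ring

lemma sum_norm_kloostermanSum_one_sq (hψ : ψ.IsPrimitive) :
    ∑ c, ‖kloostermanSum ψ c 1‖ ^ 2 = (q : ℝ) ^ 2 - q := by
  have h := sub_one_mul_sum_norm_kloostermanSum_one_pow hψ 2
  rw [sum_sum_norm_kloostermanSum_sq hψ] at h
  have hq : (q : ℝ) - 1 ≠ 0 := sub_ne_zero.2 (by exact_mod_cast Fintype.one_lt_card.ne')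
  exact mul_left_cancel₀ hq (by linear_combination h)

lemma sum_norm_kloostermanSum_one_pow_four (hψ : ψ.IsPrimitive) (h2 : ringChar F ≠ 2) :
    ∑ c, ‖kloostermanSum ψ c 1‖ ^ 4 = 2 * (q : ℝ) ^ 3 - 3 * (q : ℝ) ^ 2 - 3 * q := by
  have h := sub_one_mul_sum_norm_kloostermanSum_one_pow hψ 4
  rw [sum_sum_norm_kloostermanSum_pow_four hψ h2] at h
  have hq : (q : ℝ) - 1 ≠ 0 := sub_ne_zero.2 (by exact_mod_cast Fintype.one_lt_card.ne')
  exact mul_left_cancel₀ hq (by linear_combination h)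

theorem norm_kloostermanSum_le (hψ : ψ.IsPrimitive) (h2 : ringChar F ≠ 2) {c d : F}
    (hc : c ≠ 0) (hd : d ≠ 0) :
    ‖kloostermanSum ψ c d‖ ≤ √(q + (q : ℝ) ^ ((3 : ℝ) / 2)) := by
  have hq : (2 : ℝ) ≤ q := by have := three_le_card h2; norm_cast; omega
  have h0 : ‖kloostermanSum ψ 0 1‖ = 1 := by
    rw [kloostermanSum_comm, kloostermanSum_zero_right hψ, if_neg one_ne_zero]; simp
  have h4 : ∑ n, (‖kloostermanSum ψ n 1‖ ^ 2) ^ 2 = 2 * (q : ℝ) ^ 3 - 3 * (q : ℝ) ^ 2 - 3 * q := by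
    simp only [← pow_mul]; exact sum_norm_kloostermanSum_one_pow_four hψ h2
  have hCS := sq_sum_sub_sub_le univ (fun n ↦ ‖kloostermanSum ψ n 1‖ ^ 2) (mem_univ 0)
    (mem_univ (c * d)) (mul_ne_zero hc hd).symm
  rw [sum_norm_kloostermanSum_one_sq hψ, h4, h0, card_univ, one_pow, one_pow] at hCS
  have hrpow : (q : ℝ) ^ ((3 : ℝ) / 2) = q * √q := by
    rw [show (3 : ℝ) / 2 = 1 + 1 / 2 by norm_num, Real.rpow_add (by positivity), Real.rpow_one,
      Real.sqrt_eq_rpow]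
  rw [kloostermanSum_eq_mul_one c hd, ← Real.sqrt_sq (norm_nonneg _), hrpow]
  exact Real.sqrt_le_sqrt (le_add_mul_sqrt_of_sq_le hq hCS)

end FiniteField

lemma Kl_eq_kloostermanSum (p : ℕ) [Fact p.Prime] (a b : ℤ) :
    Kl p a b = kloostermanSum ZMod.stdAddChar (a : ZMod p) (b : ZMod p) := by
  have hp := (Fact.out : p.Prime).one_lt
  have hlt {x : ℕ} (hx : x ∈ Icc 1 (p - 1)) : x < p := by have := (mem_Icc.1 hx).2; omega
  refine sum_bij' (fun x hx ↦ Units.mk0 (x : ZMod p) ?_) (fun u _ ↦ (u : ZMod p).val)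
    (fun _ _ ↦ mem_univ _) (fun u _ ↦ ?_) (fun x hx ↦ ?_)
    (fun u _ ↦ Units.ext (ZMod.natCast_zmod_val _)) (fun x hx ↦ ?_)
  · rw [Ne, ZMod.natCast_eq_zero_iff]
    exact Nat.not_dvd_of_pos_of_lt (mem_Icc.1 hx).1 (hlt hx)
  · exact mem_Icc.2 ⟨ZMod.val_pos.2 u.ne_zero, by have := (u : ZMod p).val_lt; omega⟩
  · exact ZMod.val_natCast_of_lt (hlt hx)
  · rw [ep, ← ZMod.stdAddChar_coe]
    push_cast [ZMod.natCast_val, ZMod.cast_id]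
    rfl

theorem stmt8 (p : ℕ) (hp : p.Prime) (hp2 : p ≠ 2) (a b : ℤ)
    (ha : ¬ (p : ℤ) ∣ a) (hb : ¬ (p : ℤ) ∣ b) :
    ‖Kl p a b‖ ≤ Real.sqrt ((p : ℝ) + (p : ℝ) ^ ((3 : ℝ) / 2)) := by
  have := Fact.mk hp
  have hne {n : ℤ} (hn : ¬ (p : ℤ) ∣ n) : (n : ZMod p) ≠ 0 := by
    rwa [Ne, ZMod.intCast_zmod_eq_zero_iff_dvd]
  have h := norm_kloostermanSum_le (ZMod.isPrimitive_stdAddChar p)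
    (by rwa [ZMod.ringChar_zmod_n]) (hne ha) (hne hb)
  rwa [ZMod.card, ← Kl_eq_kloostermanSum] at h
end
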